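/- arXiv:1602.06200 — 3 statements merged into one kernel-verified Lean document; each statement's English description precedes it below -/
import Mathlib

section
/- The generating function B(z) = (1 - sqrt(1-4z))/(2z) of binary trees counted by the number of internal nodes (so that [z^n]B(z) is the n-th Catalan number) satisfies the functional equation B(z) = 1 + (z/(1-2z)) · B(z^2/(1-2z)^2); this holds as an identity of formal power series (equivalently, for all real z with 0 ≤ z < 1/4, where B(0) := 1). -/
/-!
Squaring the Catalan recurrence shows that `G(z) = ∑ Cₙ zⁿ` satisfies `z G² + 1 = G`, so
`(2 z G(z) - 1)² = 1 - 4z` on `|z| < 1/4`. There `√(1 - 4z)` never vanishes, so the continuous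
function `2 z G(z) - 1`, which is `-1` at `0`, equals `-√(1 - 4z)` throughout; this identifies
`G` with `B`. The functional equation is an identity between closed forms, because
`1 - 4 (z / (1 - 2z))² = (1 - 4z) / (1 - 2z)²`.
-/

/-- The generating function of binary trees counted by internal nodes,
`B(z) = (1 - sqrt(1-4z))/(2z)`, with `B(0) := 1`. -/
noncomputable def B (z : ℝ) : ℝ :=
  if z = 0 then 1 else (1 - Real.sqrt (1 - 4 * z)) / (2 * z)

open Set

lemma catalan_le_four_pow (n : ℕ) : catalan n ≤ 4 ^ n :=
  calc catalan n ≤ (n + 1) * catalan n := Nat.le_mul_of_pos_left _ n.succ_pos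
    _ = n.centralBinom := succ_mul_catalan_eq_centralBinom n
    _ ≤ 4 ^ n := Nat.centralBinom_le_four_pow n

lemma summable_norm_catalan_mul_pow {z : ℝ} (hz : |z| < 1 / 4) :
    Summable fun n ↦ ‖(catalan n : ℝ) * z ^ n‖ := by
  refine .of_nonneg_of_le (fun n ↦ norm_nonneg _) (fun n ↦ ?_)
    (summable_geometric_of_lt_one (by positivity) (by linarith : 4 * |z| < 1))
  rw [norm_mul, norm_pow, Real.norm_natCast, Real.norm_eq_abs, mul_pow]
  gcongr
  exact_mod_cast catalan_le_four_pow n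

noncomputable def catalanGF (z : ℝ) : ℝ := ∑' n, (catalan n : ℝ) * z ^ n

lemma catalanGF_zero : catalanGF 0 = 1 := by
  rw [catalanGF, tsum_eq_single 0 fun n hn ↦ by simp [hn]]
  simp

lemma catalanGF_sq_mul_add_one {z : ℝ} (hz : |z| < 1 / 4) :
    catalanGF z ^ 2 * z + 1 = catalanGF z := by
  have hsum := summable_norm_catalan_mul_pow hz
  have hsq : catalanGF z ^ 2 = ∑' n, (catalan (n + 1) : ℝ) * z ^ n := by
    rw [sq, catalanGF, tsum_mul_tsum_eq_tsum_sum_antidiagonal_of_summable_norm hsum hsum]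
    refine tsum_congr fun n ↦ ?_
    rw [catalan_succ', Nat.cast_sum, Finset.sum_mul]
    refine Finset.sum_congr rfl fun ij hij ↦ ?_
    rw [← Finset.HasAntidiagonal.mem_antidiagonal.mp hij]
    push_cast
    ring
  rw [hsq, ← tsum_mul_right, catalanGF, hsum.of_norm.tsum_eq_zero_add, add_comm]
  simp [pow_succ, mul_assoc]

lemma continuousOn_catalanGF : ContinuousOn catalanGF (Ioo (-(1 / 4)) (1 / 4)) := by
  refine isOpen_Ioo.continuousOn_iff.mpr fun x hx ↦ ?_
  obtain ⟨r, hxr, hr⟩ := exists_between (abs_lt.mpr hx)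
  have hr_abs : |r| = r := abs_of_pos ((abs_nonneg x).trans_lt hxr)
  have hball : ContinuousOn catalanGF (Icc (-r) r) := by
    refine continuousOn_tsum (fun n ↦ by fun_prop)
      (summable_norm_catalan_mul_pow (hr_abs.trans_lt hr)) fun n y hy ↦ ?_
    rw [norm_mul, norm_mul, norm_pow, norm_pow]
    gcongr
    exact (abs_le.mpr hy).trans_eq hr_abs.symm
  exact hball.continuousAt
    (Icc_mem_nhds (by linarith [neg_abs_le x]) (by linarith [le_abs_self x]))

lemma two_mul_mul_catalanGF_sub_one {z : ℝ} (hz : |z| < 1 / 4) :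
    2 * z * catalanGF z - 1 = -√(1 - 4 * z) := by
  set f : ℝ → ℝ := fun t ↦ 2 * t * catalanGF t - 1
  set g : ℝ → ℝ := fun t ↦ -√(1 - 4 * t)
  have hsq : EqOn (f ^ 2) (g ^ 2) (Ioo (-(1 / 4)) (1 / 4)) := fun t ht ↦ by
    have := catalanGF_sq_mul_add_one (abs_lt.mpr ht)
    simp only [f, g, Pi.pow_apply, neg_sq, Real.sq_sqrt (by linarith [ht.2] : 0 ≤ 1 - 4 * t)]
    linear_combination 4 * t * this
  have hg_ne {t : ℝ} (ht : t ∈ Ioo (-(1 / 4)) (1 / 4)) : g t ≠ 0 :=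
    neg_ne_zero.mpr (Real.sqrt_ne_zero'.mpr (by linarith [ht.2]))
  refine isPreconnected_Ioo.eq_of_sq_eq (by have := continuousOn_catalanGF; fun_prop)
    (by fun_prop) hsq hg_ne (y := 0) (by norm_num) ?_ (abs_lt.mp hz)
  simp [f, g, catalanGF_zero]

lemma B_eq_catalanGF {z : ℝ} (hz : |z| < 1 / 4) : B z = catalanGF z := by
  rcases eq_or_ne z 0 with rfl | hz0
  · rw [B, if_pos rfl, catalanGF_zero]
  · rw [B, if_neg hz0, div_eq_iff (by positivity)]
    linarith [two_mul_mul_catalanGF_sub_one hz]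

lemma hasSum_catalan_mul_pow {z : ℝ} (hz : |z| < 1 / 4) :
    HasSum (fun n ↦ (catalan n : ℝ) * z ^ n) (B z) :=
  B_eq_catalanGF hz ▸ (summable_norm_catalan_mul_pow hz).of_norm.hasSum

lemma B_functional_equation {z : ℝ} (hz : z < 1 / 2) :
    B z = 1 + z / (1 - 2 * z) * B (z ^ 2 / (1 - 2 * z) ^ 2) := by
  rcases eq_or_ne z 0 with rfl | hz0
  · simp [B]
  have h12 : 0 < 1 - 2 * z := by linarith
  have h12ne := h12.ne'
  have hsqrt : √(1 - 4 * (z ^ 2 / (1 - 2 * z) ^ 2)) = √(1 - 4 * z) / (1 - 2 * z) := by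
    have h : 1 - 4 * (z ^ 2 / (1 - 2 * z) ^ 2) = (1 - 4 * z) / (1 - 2 * z) ^ 2 := by
      rw [show 1 - 4 * z = (1 - 2 * z) ^ 2 - 4 * z ^ 2 by ring, sub_div,
        div_self (pow_ne_zero 2 h12ne), mul_div_assoc]
    rw [h, Real.sqrt_div' _ (sq_nonneg _), Real.sqrt_sq h12.le]
  rw [B, B, if_neg hz0, if_neg (by positivity), hsqrt]
  -- keeps `field_simp` from normalizing under the square root, which blocks the cancellation
  generalize √(1 - 4 * z) = s
  field_simp
  ring

/-- `B` is the generating function of the Catalan numbers, and it satisfies the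
functional equation `B(z) = 1 + (z/(1-2z)) · B(z²/(1-2z)²)` for `0 ≤ z < 1/4`. -/
theorem B_eq_catalan_series_and_functional_equation :
    (∀ z : ℝ, 0 ≤ z → z < 1 / 4 →
      HasSum (fun n : ℕ => (catalan n : ℝ) * z ^ n) (B z)) ∧
    (∀ z : ℝ, 0 ≤ z → z < 1 / 4 →
      B z = 1 + z / (1 - 2 * z) * B (z ^ 2 / (1 - 2 * z) ^ 2)) :=
  ⟨fun z hz0 hz ↦ hasSum_catalan_mul_pow (by rwa [abs_of_nonneg hz0]),
    fun z _ hz ↦ B_functional_equation (by linarith)⟩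
end

section
/- Touchard's identity: for every n ≥ 0, the Catalan numbers satisfy C_{n+1} = Σ_{0 ≤ k ≤ n/2} C_k · 2^{n-2k} · binom(n, 2k). -/
/-!
Write the right-hand side as `2 ^ n * S n` with `S n = ∑ k, C_k * choose n (2k) / 4 ^ k`.
Zeilberger's algorithm finds a certificate `G n k` with
`(n + 3) w (n + 1) k - (2n + 3) w n k = G n k - G n (k + 1)` for the summands `w` of `S`;
summing over `k` telescopes to `(n + 3) S (n + 1) = (2n + 3) S n`. Hence `2 ^ n * S n` obeys the
first-order recurrence `(n + 3) C_{n+2} = 2 (2n + 3) C_{n+1}` of the Catalan numbers and starts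
at `C_1 = 1`. After clearing the Catalan factors, the certificate identity is a contiguous
relation between binomial coefficients.
-/

open Finset

theorem Nat.add_three_mul_choose_succ_succ_add (n j : ℕ) :
    (n + 3) * (n + 1).choose (j + 1) + (j + 2) * n.choose (j + 2) =
      (2 * n + 3) * n.choose (j + 1) + (j + 3) * n.choose j := by
  have h₀ := Nat.add_one_mul_choose_eq n j
  have h₁ := Nat.add_one_mul_choose_eq n (j + 1)
  rw [Nat.choose_succ_succ'] at h₀ h₁ ⊢
  zify at h₀ h₁ ⊢
  linear_combination h₀ - h₁

theorem add_two_mul_catalan_succ (n : ℕ) :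
    (n + 2) * catalan (n + 1) = 2 * (2 * n + 1) * catalan n := by
  refine Nat.eq_of_mul_eq_mul_left (Nat.zero_lt_succ n) ?_
  have h₀ := succ_mul_catalan_eq_centralBinom n
  have h₁ := succ_mul_catalan_eq_centralBinom (n + 1)
  have h₂ := Nat.succ_mul_centralBinom_succ n
  zify at h₀ h₁ h₂ ⊢
  linear_combination (n + 1) * h₁ + h₂ - 2 * (2 * n + 1) * h₀

namespace Touchard

-- Dividing by `4 ^ k` instead of multiplying by `2 ^ (n - 2k)` avoids truncated subtraction.
def weight (n k : ℕ) : ℚ := catalan k * n.choose (2 * k) / 4 ^ k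

def certificate (n : ℕ) : ℕ → ℚ
  | 0 => 0
  | k + 1 => (2 * k + 1) * catalan k * n.choose (2 * k + 1) / 4 ^ k

lemma weight_eq_zero {n k : ℕ} (h : n < 2 * k) : weight n k = 0 := by
  simp [weight, Nat.choose_eq_zero_of_lt h]

lemma add_three_mul_weight_succ_sub (n k : ℕ) :
    (n + 3) * weight (n + 1) k - (2 * n + 3) * weight n k =
      certificate n k - certificate n (k + 1) := by
  cases k with
  | zero => simp [weight, certificate, two_mul]
  | succ k =>
    have hC : ((k : ℚ) + 2) * catalan (k + 1) = 2 * (2 * k + 1) * catalan k := by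
      exact_mod_cast add_two_mul_catalan_succ k
    have hB := congrArg (Nat.cast : ℕ → ℚ) (Nat.add_three_mul_choose_succ_succ_add n (2 * k + 1))
    simp only [weight, certificate]
    push_cast at hB ⊢
    linear_combination (catalan (k + 1) / 4 ^ (k + 1) : ℚ) * hB
      + (2 * n.choose (2 * k + 1) / 4 ^ (k + 1) : ℚ) * hC

lemma sum_range_weight_of_lt {n N : ℕ} (h : n / 2 < N) :
    ∑ k ∈ range N, weight n k = ∑ k ∈ range (n / 2 + 1), weight n k := by
  refine (sum_subset (range_subset_range.2 h) fun k _ hk => weight_eq_zero ?_).symm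
  simp only [mem_range, not_lt] at hk
  omega

lemma add_three_mul_sum_weight_succ (n : ℕ) :
    (n + 3) * ∑ k ∈ range ((n + 1) / 2 + 1), weight (n + 1) k =
      (2 * n + 3) * ∑ k ∈ range (n / 2 + 1), weight n k := by
  rw [← sum_range_weight_of_lt (N := n + 2) (by omega),
    ← sum_range_weight_of_lt (N := n + 2) (by omega), mul_sum, mul_sum, ← sub_eq_zero,
    ← sum_sub_distrib]
  simp only [add_three_mul_weight_succ_sub, sum_range_sub']
  simp [certificate, Nat.choose_eq_zero_of_lt (show n < 2 * (n + 1) + 1 by omega)]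

lemma catalan_succ_eq_two_pow_mul_sum_weight (n : ℕ) :
    (catalan (n + 1) : ℚ) = 2 ^ n * ∑ k ∈ range (n / 2 + 1), weight n k := by
  induction n with
  | zero => simp [weight]
  | succ n ih =>
    have hC : ((n : ℚ) + 3) * catalan (n + 2) = 2 * (2 * n + 3) * catalan (n + 1) := by
      exact_mod_cast add_two_mul_catalan_succ (n + 1)
    have hS := add_three_mul_sum_weight_succ n
    refine mul_left_cancel₀ (show (n : ℚ) + 3 ≠ 0 by positivity) ?_
    linear_combination hC - 2 ^ (n + 1) * hS + 2 * (2 * n + 3) * ih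

lemma cast_catalan_mul_two_pow_mul_choose {n k : ℕ} (h : 2 * k ≤ n) :
    ((catalan k * 2 ^ (n - 2 * k) * n.choose (2 * k) : ℕ) : ℚ) = 2 ^ n * weight n k := by
  have h2 : (2 : ℚ) ^ n = 2 ^ (n - 2 * k) * 4 ^ k := by
    rw [show (4 : ℚ) = 2 ^ 2 by norm_num, ← pow_mul, ← pow_add, Nat.sub_add_cancel h]
  rw [weight, h2]
  push_cast
  field_simp

end Touchard

/-- Touchard's identity for the Catalan numbers:
`C_{n+1} = Σ_{0 ≤ k ≤ n/2} C_k · 2^{n-2k} · binom(n, 2k)`. -/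
theorem touchard_identity (n : ℕ) :
    catalan (n + 1) =
      ∑ k ∈ Finset.range (n / 2 + 1), catalan k * 2 ^ (n - 2 * k) * Nat.choose n (2 * k) := by
  have hsummand : ∀ k ∈ range (n / 2 + 1),
      ((catalan k * 2 ^ (n - 2 * k) * n.choose (2 * k) : ℕ) : ℚ) = 2 ^ n * Touchard.weight n k :=
    fun k hk => Touchard.cast_catalan_mul_two_pow_mul_choose (by rw [mem_range] at hk; omega)
  rw [← Nat.cast_inj (R := ℚ), Touchard.catalan_succ_eq_two_pow_mul_sum_weight, mul_sum,
    Nat.cast_sum, sum_congr rfl hsummand]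
end

section
/- For every r ≥ 0, under the substitution z = u/(1+u)^2 one has the explicit representation B_r(z) = ((1-u^2)/u) · Σ_{j=0}^{r} u^{2^j}/(1 - u^{2^{j+1}}); this holds as an identity of formal power series in u (equivalently, for all real u with 0 < u < 1). -/
/-- The functions `B_r`, defined by `B_0(z) = 1` and
`B_r(z) = 1 + (z/(1-2z)) · B_{r-1}(z²/(1-2z)²)`;
`[z^n] B_r(z)` counts binary trees with `n` internal nodes and register function `≤ r`. -/
noncomputable def Br : ℕ → ℝ → ℝ
  | 0, _ => 1
  | r + 1, z => 1 + z / (1 - 2 * z) * Br r (z ^ 2 / (1 - 2 * z) ^ 2)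

/-!
With `φ u = u / (1 + u)²` one has `φ u / (1 - 2 φ u) = u / (1 + u²)` and
`(φ u)² / (1 - 2 φ u)² = φ (u²)`: the substitution turns the inner map of the recursion into
squaring. Hence `B_{r+1}(φ u) = 1 + u / (1 + u²) · B_r(φ (u²))`, and the explicit sum satisfies
the same recursion after splitting off its `j = 0` term, which contributes the `1`.
-/

open Finset

lemma sum_range_succ_pow_two_pow_div {K : Type*} [Field K] (r : ℕ) (u : K) :
    ∑ j ∈ range (r + 2), u ^ 2 ^ j / (1 - u ^ 2 ^ (j + 1)) =
      u / (1 - u ^ 2) + ∑ j ∈ range (r + 1), (u ^ 2) ^ 2 ^ j / (1 - (u ^ 2) ^ 2 ^ (j + 1)) := by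
  rw [sum_range_succ', add_comm]
  congr 1
  · norm_num
  · refine sum_congr rfl fun j _ => ?_
    rw [← pow_mul, ← pow_mul, ← pow_succ', ← pow_succ']

lemma Br_succ_div_one_add_sq (r : ℕ) {u : ℝ} (hu : 1 + u ≠ 0) :
    Br (r + 1) (u / (1 + u) ^ 2) = 1 + u / (1 + u ^ 2) * Br r (u ^ 2 / (1 + u ^ 2) ^ 2) := by
  have h_sq : 1 + u ^ 2 ≠ 0 := by positivity
  have h_denom : 1 - 2 * (u / (1 + u) ^ 2) = (1 + u ^ 2) / (1 + u) ^ 2 := by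
    field_simp
    ring
  have h_coeff : u / (1 + u) ^ 2 / ((1 + u ^ 2) / (1 + u) ^ 2) = u / (1 + u ^ 2) := by
    field_simp
  have h_arg : (u / (1 + u) ^ 2) ^ 2 / ((1 + u ^ 2) / (1 + u) ^ 2) ^ 2 =
      u ^ 2 / (1 + u ^ 2) ^ 2 := by
    field_simp
  rw [Br, h_denom, h_coeff, h_arg]

lemma Br_div_one_add_sq (r : ℕ) {u : ℝ} (hu : u ≠ 0) (hu₂ : u ^ 2 ≠ 1) :
    Br r (u / (1 + u) ^ 2) =
      (1 - u ^ 2) / u * ∑ j ∈ range (r + 1), u ^ 2 ^ j / (1 - u ^ 2 ^ (j + 1)) := by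
  induction r generalizing u with
  | zero =>
    have h_sub : 1 - u ^ 2 ≠ 0 := sub_ne_zero.mpr hu₂.symm
    simp only [Br, zero_add, sum_range_one, pow_zero, pow_one]
    field_simp
  | succ r ih =>
    have h_add : 1 + u ≠ 0 := fun h => hu₂ (by rw [eq_neg_of_add_eq_zero_right h]; ring)
    have h_sub : 1 - u ^ 2 ≠ 0 := sub_ne_zero.mpr hu₂.symm
    have h_four : 1 - (u ^ 2) ^ 2 = (1 - u ^ 2) * (1 + u ^ 2) := by ring
    have h_sub_sq : 1 - (u ^ 2) ^ 2 ≠ 0 := h_four ▸ mul_ne_zero h_sub (by positivity)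
    rw [Br_succ_div_one_add_sq r h_add, sum_range_succ_pow_two_pow_div,
      ih (pow_ne_zero 2 hu) (sub_ne_zero.mp h_sub_sq).symm, h_four]
    field_simp

/-- Under the substitution `z = u/(1+u)²`, one has the explicit representation
`B_r(z) = ((1-u²)/u) · Σ_{j=0}^{r} u^{2^j}/(1 - u^{2^{j+1}})` for all `0 < u < 1`. -/
theorem Br_explicit (r : ℕ) (u : ℝ) (h₀ : 0 < u) (h₁ : u < 1) :
    Br r (u / (1 + u) ^ 2) =
      (1 - u ^ 2) / u *
        ∑ j ∈ Finset.range (r + 1), u ^ (2 ^ j) / (1 - u ^ (2 ^ (j + 1))) :=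
  Br_div_one_add_sq r h₀.ne' (by nlinarith)
end
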